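/- Let φ : (0,1) → [0,∞) be nondecreasing with ∫₀¹ φ(t) dt = 1 and define the spectral risk measure ρ_φ(X) = ∫₀¹ φ(t) F_X^{-1}(t) dt. Let X be a class of random variables closed under negation on which ρ_φ is real-valued. If X_n → X a.s. with |X_n| ≤ Y a.s. for all n, where Y, −Y ∈ X (so that φ·F_Y^{-1} and φ·F_{−Y}^{-1} are integrable on (0,1)), then ρ_φ(X_n) → ρ_φ(X). -/

import Mathlib

/-!
Almost sure convergence `X n → X₀` gives convergence of the distribution functions at every
continuity point of the limit one, hence convergence of the quantile functions at every
continuity point of the limit quantile function, which is monotone and so continuous almost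
everywhere on `(0,1)`. The bounds `-Y ≤ X n ≤ Y` pass to the quantiles,
`F_{-Y}⁻¹ ≤ F_{X n}⁻¹ ≤ F_Y⁻¹`, and dominated convergence concludes.
-/

open MeasureTheory Filter

/-- Left quantile function `F_X⁻¹(t) = inf {x : P(X ≤ x) ≥ t}`. -/
noncomputable def leftQuantile {Ω : Type*} [MeasurableSpace Ω] (μ : Measure Ω)
    (X : Ω → ℝ) (t : ℝ) : ℝ :=
  sInf {x : ℝ | t ≤ (μ {ω | X ω ≤ x}).toReal}

/-- The spectral risk measure `ρ_φ(X) = ∫₀¹ φ(t) F_X⁻¹(t) dt`. -/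
noncomputable def spectralRisk {Ω : Type*} [MeasurableSpace Ω] (μ : Measure Ω)
    (φ : ℝ → ℝ) (X : Ω → ℝ) : ℝ :=
  ∫ t in Set.Ioo (0 : ℝ) 1, φ t * leftQuantile μ X t

open Set Topology ProbabilityTheory

lemma eventually_le_iff_of_tendsto {ι α : Type*} [LinearOrder α] [TopologicalSpace α]
    [OrderClosedTopology α] {l : Filter ι} {a : ι → α} {b x : α} (ha : Tendsto a l (𝓝 b))
    (hb : b ≠ x) : ∀ᶠ n in l, (a n ≤ x ↔ b ≤ x) := by
  rcases hb.lt_or_gt with hbx | hxb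
  · filter_upwards [ha.eventually (eventually_lt_nhds hbx)] with n hn
    exact iff_of_true hn.le hbx.le
  · filter_upwards [ha.eventually (eventually_gt_nhds hxb)] with n hn
    exact iff_of_false hn.not_ge hxb.not_ge

lemma MonotoneOn.ae_restrict_continuousAt {f : ℝ → ℝ} {s : Set ℝ} (hs : IsOpen s)
    (hf : MonotoneOn f s) : ∀ᵐ t ∂volume.restrict s, ContinuousAt f t := by
  rw [ae_restrict_iff' hs.measurableSet]
  filter_upwards [hf.countable_not_continuousWithinAt.ae_notMem volume] with t hdisc ht
  exact (continuousWithinAt_iff_continuousAt (hs.mem_nhds ht)).1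
    (not_not.1 fun h => hdisc ⟨ht, h⟩)

lemma tendsto_integral_mul_of_tendsto_of_le_of_le {α : Type*} [MeasurableSpace α]
    {m : Measure α} {φ g₀ lo hi : α → ℝ} {g : ℕ → α → ℝ}
    (hg : ∀ n, AEStronglyMeasurable (fun t => φ t * g n t) m)
    (hlo : Integrable (fun t => φ t * lo t) m) (hhi : Integrable (fun t => φ t * hi t) m)
    (hbound : ∀ n, ∀ᵐ t ∂m, lo t ≤ g n t ∧ g n t ≤ hi t)
    (hlim : ∀ᵐ t ∂m, Tendsto (fun n => g n t) atTop (𝓝 (g₀ t))) :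
    Tendsto (fun n => ∫ t, φ t * g n t ∂m) atTop (𝓝 (∫ t, φ t * g₀ t ∂m)) := by
  refine tendsto_integral_of_dominated_convergence (fun t => |φ t * lo t| + |φ t * hi t|) hg
    (hlo.abs.add hhi.abs) (fun n => ?_) (hlim.mono fun t ht => ht.const_mul (φ t))
  filter_upwards [hbound n] with t ⟨hlo_t, hhi_t⟩
  calc ‖φ t * g n t‖ = |φ t| * |g n t| := by rw [Real.norm_eq_abs, abs_mul]
    _ ≤ |φ t| * (|lo t| + |hi t|) := by
        gcongr
        exact (abs_le_max_abs_abs hlo_t hhi_t).trans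
          (max_le_add_of_nonneg (abs_nonneg _) (abs_nonneg _))
    _ = |φ t * lo t| + |φ t * hi t| := by rw [abs_mul, abs_mul, mul_add]

namespace ProbabilityTheory

-- Junk outside `(0,1)`, where the set is empty or unbounded below.
noncomputable def quantile (ν : Measure ℝ) (t : ℝ) : ℝ :=
  sInf {x | t ≤ cdf ν x}

variable {ν : Measure ℝ} {t x : ℝ}

lemma bddBelow_setOf_le_cdf (ht : 0 < t) : BddBelow {x | t ≤ cdf ν x} := by
  obtain ⟨x₀, hx₀⟩ := ((tendsto_cdf_atBot ν).eventually (eventually_lt_nhds ht)).exists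
  exact ⟨x₀, fun y hy => le_of_not_gt fun hyx₀ =>
    (hy.trans ((monotone_cdf ν) hyx₀.le)).not_gt hx₀⟩

lemma nonempty_setOf_le_cdf (ht : t < 1) : {x | t ≤ cdf ν x}.Nonempty :=
  (((tendsto_cdf_atTop ν).eventually (eventually_gt_nhds ht)).exists).imp fun _ => le_of_lt

-- A Galois connection, thanks to the right continuity of the cdf.
lemma quantile_le_iff_le_cdf (ht : t ∈ Ioo 0 1) : quantile ν t ≤ x ↔ t ≤ cdf ν x := by
  refine ⟨fun hx => ?_, csInf_le (bddBelow_setOf_le_cdf ht.1)⟩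
  have hright : Tendsto (cdf ν) (𝓝[>] x) (𝓝 (cdf ν x)) :=
    ((cdf ν).right_continuous x).mono Ioi_subset_Ici_self
  refine ge_of_tendsto hright (eventually_nhdsWithin_of_forall fun y (hy : x < y) => ?_)
  obtain ⟨z, hz, hzy⟩ := exists_lt_of_csInf_lt (nonempty_setOf_le_cdf ht.2) (hx.trans_lt hy)
  exact hz.trans ((monotone_cdf ν) hzy.le)

lemma le_cdf_quantile (ht : t ∈ Ioo 0 1) : t ≤ cdf ν (quantile ν t) :=
  (quantile_le_iff_le_cdf ht).1 le_rfl

lemma lt_quantile_iff_cdf_lt (ht : t ∈ Ioo 0 1) : x < quantile ν t ↔ cdf ν x < t := by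
  simpa only [not_le] using (quantile_le_iff_le_cdf ht).not

lemma monotoneOn_quantile : MonotoneOn (quantile ν) (Ioo 0 1) := fun _ hs _ hu hsu =>
  (quantile_le_iff_le_cdf hs).2 (hsu.trans (le_cdf_quantile hu))

lemma quantile_le_quantile {ν' : Measure ℝ} (h : ∀ x, cdf ν' x ≤ cdf ν x)
    (ht : t ∈ Ioo 0 1) : quantile ν t ≤ quantile ν' t :=
  (quantile_le_iff_le_cdf ht).2 ((le_cdf_quantile ht).trans (h _))

lemma exists_continuousAt_cdf_mem_Ioo {a b : ℝ} (hab : a < b) :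
    ∃ x ∈ Ioo a b, ContinuousAt (cdf ν) x := by
  obtain ⟨x, hx, hxab⟩ :=
    ((monotone_cdf ν).countable_not_continuousAt.dense_compl ℝ).exists_between hab
  exact ⟨x, hxab, not_not.1 hx⟩

lemma tendsto_quantile {ν : ℕ → Measure ℝ} {ν₀ : Measure ℝ}
    (hcdf : ∀ x, ContinuousAt (cdf ν₀) x →
      Tendsto (fun n => cdf (ν n) x) atTop (𝓝 (cdf ν₀ x)))
    (ht : t ∈ Ioo 0 1) (hcont : ContinuousAt (quantile ν₀) t) :
    Tendsto (fun n => quantile (ν n) t) atTop (𝓝 (quantile ν₀ t)) := by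
  have hIoo : Ioo (0 : ℝ) 1 ∈ 𝓝 t := isOpen_Ioo.mem_nhds ht
  refine tendsto_order.2 ⟨fun b hb => ?_, fun b hb => ?_⟩
  · have hnear : ∀ᶠ s in 𝓝[<] t, (b < quantile ν₀ s ∧ s ∈ Ioo 0 1) ∧ s < t :=
      ((hcont.eventually (eventually_gt_nhds hb)).and hIoo).filter_mono nhdsWithin_le_nhds
        |>.and self_mem_nhdsWithin
    obtain ⟨s, ⟨hbs, hs⟩, hst⟩ := hnear.exists
    obtain ⟨x, hx, hxc⟩ := exists_continuousAt_cdf_mem_Ioo hbs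
    have hx₀ : cdf ν₀ x < t := ((lt_quantile_iff_cdf_lt hs).1 hx.2).trans hst
    filter_upwards [(hcdf x hxc).eventually (eventually_lt_nhds hx₀)] with n hn
    exact hx.1.trans ((lt_quantile_iff_cdf_lt ht).2 hn)
  · have hnear : ∀ᶠ s in 𝓝[>] t, (quantile ν₀ s < b ∧ s ∈ Ioo 0 1) ∧ t < s :=
      ((hcont.eventually (eventually_lt_nhds hb)).and hIoo).filter_mono nhdsWithin_le_nhds
        |>.and self_mem_nhdsWithin
    obtain ⟨s, ⟨hsb, hs⟩, hts⟩ := hnear.exists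
    obtain ⟨x, hx, hxc⟩ := exists_continuousAt_cdf_mem_Ioo hsb
    have hx₀ : t < cdf ν₀ x := hts.trans_le ((quantile_le_iff_le_cdf hs).1 hx.1.le)
    filter_upwards [(hcdf x hxc).eventually (eventually_gt_nhds hx₀)] with n hn
    exact ((quantile_le_iff_le_cdf ht).2 hn.le).trans_lt hx.2

lemma measure_singleton_eq_zero_of_continuousAt_cdf [IsProbabilityMeasure ν]
    (hx : ContinuousAt (cdf ν) x) : ν {x} = 0 := by
  rw [← measure_cdf ν, StieltjesFunction.measure_singleton,
    leftLim_eq_of_tendsto (hx.tendsto.mono_left nhdsWithin_le_nhds), sub_self,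
    ENNReal.ofReal_zero]

end ProbabilityTheory

section RandomVariable

variable {Ω : Type*} [MeasurableSpace Ω] {μ : Measure Ω} [IsProbabilityMeasure μ]
  {X : ℕ → Ω → ℝ} {X₀ : Ω → ℝ}

lemma cdf_map_apply {Z : Ω → ℝ} (hZ : Measurable Z) (x : ℝ) :
    cdf (μ.map Z) x = (μ {ω | Z ω ≤ x}).toReal := by
  have := Measure.isProbabilityMeasure_map (μ := μ) hZ.aemeasurable
  rw [cdf_eq_real, measureReal_def, Measure.map_apply hZ measurableSet_Iic]
  rfl

lemma leftQuantile_eq_quantile_map {Z : Ω → ℝ} (hZ : Measurable Z) :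
    leftQuantile μ Z = quantile (μ.map Z) := by
  ext t
  simp only [leftQuantile, quantile, cdf_map_apply hZ]

lemma monotoneOn_leftQuantile {Z : Ω → ℝ} (hZ : Measurable Z) :
    MonotoneOn (leftQuantile μ Z) (Ioo 0 1) := by
  rw [leftQuantile_eq_quantile_map hZ]
  exact monotoneOn_quantile

lemma leftQuantile_le_leftQuantile {W Z : Ω → ℝ} (hW : Measurable W) (hZ : Measurable Z)
    (hWZ : W ≤ᵐ[μ] Z) {t : ℝ} (ht : t ∈ Ioo 0 1) :
    leftQuantile μ W t ≤ leftQuantile μ Z t := by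
  rw [leftQuantile_eq_quantile_map hW, leftQuantile_eq_quantile_map hZ]
  refine quantile_le_quantile (fun x => ?_) ht
  rw [cdf_map_apply hW, cdf_map_apply hZ]
  refine ENNReal.toReal_mono (measure_ne_top μ _) (measure_mono_ae ?_)
  filter_upwards [hWZ] with ω hω hZx
  exact hω.trans hZx

lemma tendsto_cdf_map_of_ae_tendsto (hX : ∀ n, Measurable (X n))
    (hX₀ : Measurable X₀) (hlim : ∀ᵐ ω ∂μ, Tendsto (fun n => X n ω) atTop (𝓝 (X₀ ω)))
    {x : ℝ} (hx : ContinuousAt (cdf (μ.map X₀)) x) :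
    Tendsto (fun n => cdf (μ.map (X n)) x) atTop (𝓝 (cdf (μ.map X₀) x)) := by
  have := Measure.isProbabilityMeasure_map (μ := μ) hX₀.aemeasurable
  have hatom : μ (X₀ ⁻¹' {x}) = 0 := by
    rw [← Measure.map_apply hX₀ (measurableSet_singleton x)]
    exact measure_singleton_eq_zero_of_continuousAt_cdf hx
  simp only [cdf_map_apply, hX, hX₀]
  refine (ENNReal.tendsto_toReal (measure_ne_top μ _)).comp
    (tendsto_measure_of_ae_tendsto_indicator_of_isFiniteMeasure atTop
      (hX₀ measurableSet_Iic) (fun n => hX n measurableSet_Iic) ?_)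
  filter_upwards [hlim, measure_eq_zero_iff_ae_notMem.1 hatom] with ω hω hωx
  exact eventually_le_iff_of_tendsto hω hωx

lemma ae_tendsto_leftQuantile (hX : ∀ n, Measurable (X n))
    (hX₀ : Measurable X₀) (hlim : ∀ᵐ ω ∂μ, Tendsto (fun n => X n ω) atTop (𝓝 (X₀ ω))) :
    ∀ᵐ t ∂volume.restrict (Ioo (0 : ℝ) 1),
      Tendsto (fun n => leftQuantile μ (X n) t) atTop (𝓝 (leftQuantile μ X₀ t)) := by
  simp only [leftQuantile_eq_quantile_map, hX, hX₀]
  filter_upwards [monotoneOn_quantile.ae_restrict_continuousAt isOpen_Ioo,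
    ae_restrict_mem measurableSet_Ioo] with t hcont ht
  exact tendsto_quantile (fun x => tendsto_cdf_map_of_ae_tendsto hX hX₀ hlim) ht hcont

end RandomVariable

theorem spectralRisk_orderContinuous_general
    {Ω : Type*} [MeasurableSpace Ω] (μ : Measure Ω) [IsProbabilityMeasure μ]
    (φ : ℝ → ℝ) (hφmono : MonotoneOn φ (Set.Ioo (0 : ℝ) 1))
    (X : ℕ → Ω → ℝ) (X₀ : Ω → ℝ) (Y : Ω → ℝ)
    (hXm : ∀ n, Measurable (X n)) (hX₀m : Measurable X₀) (hYm : Measurable Y)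
    (hYint : IntegrableOn (fun t => φ t * leftQuantile μ Y t) (Set.Ioo (0 : ℝ) 1))
    (hnegYint : IntegrableOn (fun t => φ t * leftQuantile μ (fun ω => -Y ω) t)
      (Set.Ioo (0 : ℝ) 1))
    (hdom : ∀ n, ∀ᵐ ω ∂μ, |X n ω| ≤ Y ω)
    (has : ∀ᵐ ω ∂μ, Tendsto (fun n => X n ω) atTop (nhds (X₀ ω))) :
    Tendsto (fun n => spectralRisk μ φ (X n)) atTop
      (nhds (spectralRisk μ φ X₀)) := by
  have hbound : ∀ n, ∀ᵐ t ∂volume.restrict (Ioo (0 : ℝ) 1),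
      leftQuantile μ (fun ω => -Y ω) t ≤ leftQuantile μ (X n) t ∧
        leftQuantile μ (X n) t ≤ leftQuantile μ Y t := fun n =>
    ae_restrict_of_forall_mem measurableSet_Ioo fun t ht =>
      ⟨leftQuantile_le_leftQuantile hYm.neg (hXm n)
          ((hdom n).mono fun _ h => (abs_le.1 h).1) ht,
        leftQuantile_le_leftQuantile (hXm n) hYm ((hdom n).mono fun _ h => (abs_le.1 h).2) ht⟩
  have hmeas : ∀ n, AEStronglyMeasurable (fun t => φ t * leftQuantile μ (X n) t)
      (volume.restrict (Ioo (0 : ℝ) 1)) := fun n =>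
    ((aemeasurable_restrict_of_monotoneOn measurableSet_Ioo hφmono).mul
      (aemeasurable_restrict_of_monotoneOn measurableSet_Ioo
        (monotoneOn_leftQuantile (hXm n)))).aestronglyMeasurable
  exact tendsto_integral_mul_of_tendsto_of_le_of_le hmeas hnegYint hYint hbound
    (ae_tendsto_leftQuantile hXm hX₀m has)

/-- Spectral risk measures are order continuous: if `X_n → X` a.s. with
`|X_n| ≤ Y` a.s. where `φ·F_Y⁻¹` and `φ·F_{-Y}⁻¹` are integrable on `(0,1)`,
then `ρ_φ(X_n) → ρ_φ(X)`. -/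
theorem spectralRisk_orderContinuous
    {Ω : Type*} [MeasurableSpace Ω] (μ : Measure Ω) [IsProbabilityMeasure μ]
    (φ : ℝ → ℝ) (hφmono : MonotoneOn φ (Set.Ioo (0 : ℝ) 1))
    (hφpos : ∀ t ∈ Set.Ioo (0 : ℝ) 1, 0 ≤ φ t)
    (hφint : ∫ t in Set.Ioo (0 : ℝ) 1, φ t = 1)
    (X : ℕ → Ω → ℝ) (X₀ : Ω → ℝ) (Y : Ω → ℝ)
    (hXm : ∀ n, Measurable (X n)) (hX₀m : Measurable X₀) (hYm : Measurable Y)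
    (hYint : IntegrableOn (fun t => φ t * leftQuantile μ Y t) (Set.Ioo (0 : ℝ) 1))
    (hnegYint : IntegrableOn (fun t => φ t * leftQuantile μ (fun ω => -Y ω) t)
      (Set.Ioo (0 : ℝ) 1))
    (hdom : ∀ n, ∀ᵐ ω ∂μ, |X n ω| ≤ Y ω)
    (has : ∀ᵐ ω ∂μ, Tendsto (fun n => X n ω) atTop (nhds (X₀ ω))) :
    Tendsto (fun n => spectralRisk μ φ (X n)) atTop
      (nhds (spectralRisk μ φ X₀)) :=
  spectralRisk_orderContinuous_general μ φ hφmono X X₀ Y hXm hX₀m hYm hYint hnegYint hdom has
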